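/- Let Γ ⊢ N : φ be derivable, where Γ consists of Π1 formulas and N is a normal proof term. Assume in addition that either N is an eliminator or φ is a Σ1 formula. Then N contains no occurrence of object abstraction λx; moreover, if N is an eliminator then φ is a Π1 formula. -/

import Mathlib

set_option autoImplicit false

/-- Formulas of first-order intuitionistic logic over `→` and `∀` only. -/
inductive Fml : Type
  | atom : ℕ → List ℕ → Fml
  | imp : Fml → Fml → Fml
  | all : ℕ → Fml → Fml
deriving DecidableEq

namespace Fml

def fv : Fml → List ℕ
  | atom _ args => args
  | imp φ ψ => fv φ ++ fv ψ
  | all x φ => (fv φ).filter (fun y => y != x)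

def rename (σ : ℕ → ℕ) : Fml → Fml
  | atom r args => atom r (args.map σ)
  | imp φ ψ => imp (rename σ φ) (rename σ ψ)
  | all x φ => all x (rename (Function.update σ x x) φ)

def substV (φ : Fml) (x y : ℕ) : Fml := rename (Function.update id x y) φ

/-- The target of a formula: the relation symbol at the end of it. -/
def target : Fml → ℕ
  | atom r _ => r
  | imp _ ψ => target ψ
  | all _ φ => target φ

end Fml

/-- Proof terms. -/
inductive Tm : Type
  | pvar : ℕ → Tm
  | plam : ℕ → Fml → Tm → Tm
  | app : Tm → Tm → Tm
  | olam : ℕ → Tm → Tm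
  | oapp : Tm → ℕ → Tm

abbrev Env := List (ℕ × Fml)

def fvEnv (Γ : Env) : List ℕ := Γ.flatMap fun d => d.2.fv

/-- The type-assignment (proof-assignment) rules. -/
inductive Tj : Env → Tm → Fml → Prop
  | ax {Γ : Env} {X φ} : (X, φ) ∈ Γ → Tj Γ (.pvar X) φ
  | impI {Γ X φ M ψ} : Tj ((X, φ) :: Γ) M ψ → Tj Γ (.plam X φ M) (.imp φ ψ)
  | impE {Γ M N φ ψ} : Tj Γ M (.imp φ ψ) → Tj Γ N φ → Tj Γ (.app M N) ψ
  | allI {Γ x M φ} : x ∉ fvEnv Γ → Tj Γ M φ → Tj Γ (.olam x M) (.all x φ)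
  | allE {Γ x M φ} (y : ℕ) : Tj Γ M (.all x φ) → Tj Γ (.oapp M y) (φ.substV x y)

/-- Quantifier-free formulas. -/
def QF : Fml → Prop
  | .atom _ _ => True
  | .imp φ ψ => QF φ ∧ QF ψ
  | .all _ _ => False

mutual
  /-- The Mints class Σₙ. -/
  inductive SigmaM : ℕ → Fml → Prop
    | qf {φ} : QF φ → SigmaM 0 φ
    | atom {n r args} : SigmaM (n + 1) (.atom r args)
    | ofPi {n φ} : PiM n φ → SigmaM (n + 1) φ
    | imp {n φ ψ} : PiM (n + 1) φ → SigmaM (n + 1) ψ → SigmaM (n + 1) (.imp φ ψ)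
  /-- The Mints class Πₙ. -/
  inductive PiM : ℕ → Fml → Prop
    | qf {φ} : QF φ → PiM 0 φ
    | atom {n r args} : PiM (n + 1) (.atom r args)
    | ofSigma {n φ} : SigmaM n φ → PiM (n + 1) φ
    | imp {n φ ψ} : SigmaM (n + 1) φ → PiM (n + 1) ψ → PiM (n + 1) (.imp φ ψ)
    | all {n x φ} : PiM (n + 1) φ → PiM (n + 1) (.all x φ)
end

/-- Normal proof terms: no subterm `(λX:φ.M)N` or `(λx.M)y`. -/
def NormalTm : Tm → Prop
  | .pvar _ => True
  | .plam _ _ M => NormalTm M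
  | .olam _ M => NormalTm M
  | .app M N => NormalTm M ∧ NormalTm N ∧ ∀ X φ B, M ≠ Tm.plam X φ B
  | .oapp M _ => NormalTm M ∧ ∀ x B, M ≠ Tm.olam x B

/-- Eliminator shape: `X M₁ … Mᵣ`, where `X` is a proof variable and each
`Mᵢ` is a proof term or an object variable (an *eliminator* is a normal term
of this shape; normality is a separate hypothesis below). -/
inductive IsElim : Tm → Prop
  | pvar (X : ℕ) : IsElim (.pvar X)
  | app {M} (N : Tm) : IsElim M → IsElim (.app M N)
  | oapp {M} (y : ℕ) : IsElim M → IsElim (.oapp M y)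

/-- The term contains no occurrence of object abstraction `λx`. -/
def NoOlam : Tm → Prop
  | .pvar _ => True
  | .plam _ _ M => NoOlam M
  | .olam _ _ => False
  | .app M N => NoOlam M ∧ NoOlam N
  | .oapp M _ => NoOlam M

/-! Induction on the derivation. A proof abstraction can only occur as a `Σ₁` term `λX:φ.M`,
so `φ` is `Π₁` and `M` is again a `Σ₁` term in a `Π₁` context, while an object abstraction
would need a `Σ₁` formula `∀x ψ`, and there is none. A typed normal application is an
eliminator, so its head is one too and has a `Π₁` type by induction: a `Π₁` implication has a
`Σ₁` premise (which handles the argument) and a `Π₁` conclusion, and the instances of a `Π₁`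
universal formula are `Π₁`. -/

theorem QF.rename {φ : Fml} (h : QF φ) (σ : ℕ → ℕ) : QF (φ.rename σ) :=
  match φ, h with
  | .atom _ _, _ => trivial
  | .imp _ _, ⟨h₁, h₂⟩ => ⟨h₁.rename σ, h₂.rename σ⟩

mutual

theorem SigmaM.rename {n : ℕ} {φ : Fml} (h : SigmaM n φ) (σ : ℕ → ℕ) :
    SigmaM n (φ.rename σ) :=
  match h with
  | .qf h => .qf (h.rename σ)
  | .atom => .atom
  | .ofPi h => .ofPi (h.rename σ)
  | .imp h₁ h₂ => .imp (h₁.rename σ) (h₂.rename σ)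

theorem PiM.rename {n : ℕ} {φ : Fml} (h : PiM n φ) (σ : ℕ → ℕ) :
    PiM n (φ.rename σ) :=
  match h with
  | .qf h => .qf (h.rename σ)
  | .atom => .atom
  | .ofSigma h => .ofSigma (h.rename σ)
  | .imp h₁ h₂ => .imp (h₁.rename σ) (h₂.rename σ)
  | .all h => .all (h.rename _)

end

theorem SigmaM.one_imp_iff {φ ψ : Fml} : SigmaM 1 (.imp φ ψ) ↔ PiM 1 φ ∧ SigmaM 1 ψ := by
  refine ⟨fun h => ?_, fun ⟨h₁, h₂⟩ => .imp h₁ h₂⟩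
  rcases h with _ | _ | ⟨⟨⟨hφ, hψ⟩⟩⟩ | ⟨h₁, h₂⟩
  exacts [⟨.ofSigma (.qf hφ), .ofPi (.qf hψ)⟩, ⟨h₁, h₂⟩]

theorem PiM.one_imp_iff {φ ψ : Fml} : PiM 1 (.imp φ ψ) ↔ SigmaM 1 φ ∧ PiM 1 ψ := by
  refine ⟨fun h => ?_, fun ⟨h₁, h₂⟩ => .imp h₁ h₂⟩
  rcases h with _ | _ | ⟨⟨⟨hφ, hψ⟩⟩⟩ | ⟨h₁, h₂⟩
  exacts [⟨.ofPi (.qf hφ), .ofSigma (.qf hψ)⟩, ⟨h₁, h₂⟩]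

theorem PiM.one_all_iff {x : ℕ} {φ : Fml} : PiM 1 (.all x φ) ↔ PiM 1 φ := by
  refine ⟨fun h => ?_, .all⟩
  rcases h with _ | _ | ⟨⟨⟨⟩⟩⟩ | _ | h
  exact h

theorem SigmaM.not_one_all {x : ℕ} {φ : Fml} : ¬SigmaM 1 (.all x φ) := by
  rintro (_ | _ | ⟨⟨⟨⟩⟩⟩ | _)

theorem IsElim.of_app {M N : Tm} (h : IsElim (.app M N)) : IsElim M := by
  cases h; assumption

theorem IsElim.of_oapp {M : Tm} {y : ℕ} (h : IsElim (.oapp M y)) : IsElim M := by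
  cases h; assumption

/-- Normality alone allows `(λx.M) N` and `(λX:φ.M) y`; typing is what rules them out. -/
theorem Tj.isElim_or_abs_of_normal {Γ : Env} {N : Tm} {φ : Fml} (h : Tj Γ N φ)
    (hn : NormalTm N) :
    IsElim N ∨ (∃ X ψ B, N = .plam X ψ B) ∨ ∃ x B, N = .olam x B := by
  induction h with
  | ax _ => exact .inl (.pvar _)
  | impI _ _ => exact .inr (.inl ⟨_, _, _, rfl⟩)
  | allI _ _ _ => exact .inr (.inr ⟨_, _, rfl⟩)
  | impE hM _ ih _ =>
    rcases ih hn.1 with hM' | ⟨X, ψ, B, rfl⟩ | ⟨x, B, rfl⟩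
    · exact .inl (.app _ hM')
    · exact absurd rfl (hn.2.2 X ψ B)
    · cases hM
  | allE _ hM ih =>
    rcases ih hn.1 with hM' | ⟨X, ψ, B, rfl⟩ | ⟨x, B, rfl⟩
    · exact .inl (.oapp _ hM')
    · cases hM
    · exact absurd rfl (hn.2 x B)

theorem Tj.isElim_of_normal_app {Γ : Env} {M N : Tm} {ψ : Fml} (h : Tj Γ (.app M N) ψ)
    (hn : NormalTm (.app M N)) : IsElim M := by
  obtain hE | ⟨_, _, _, ⟨⟩⟩ | ⟨_, _, ⟨⟩⟩ := h.isElim_or_abs_of_normal hn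
  exact hE.of_app

theorem Tj.isElim_of_normal_oapp {Γ : Env} {M : Tm} {y : ℕ} {ψ : Fml}
    (h : Tj Γ (.oapp M y) ψ) (hn : NormalTm (.oapp M y)) : IsElim M := by
  obtain hE | ⟨_, _, _, ⟨⟩⟩ | ⟨_, _, ⟨⟩⟩ := h.isElim_or_abs_of_normal hn
  exact hE.of_oapp

/-- Lemma 5.4 of the paper.  Let `Γ ⊢ N : φ` where `Γ`
consists of `Π₁` formulas and `N` is normal, and assume that `N` is an
eliminator or `φ` is a `Σ₁` formula.  Then `N` contains no object
abstraction; moreover if `N` is an eliminator then `φ` is a `Π₁` formula. -/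
theorem normal_pi1_no_object_abstraction (Γ : Env) (N : Tm) (φ : Fml)
    (h : Tj Γ N φ) (hn : NormalTm N)
    (hΓ : ∀ d ∈ Γ, PiM 1 d.2)
    (hcase : IsElim N ∨ SigmaM 1 φ) :
    NoOlam N ∧ (IsElim N → PiM 1 φ) := by
  induction h with
  | ax hmem => exact ⟨trivial, fun _ => hΓ _ hmem⟩
  | impI _ ih =>
    have hσ := SigmaM.one_imp_iff.mp (hcase.resolve_left nofun)
    refine ⟨(ih hn ?_ (.inr hσ.2)).1, nofun⟩
    rintro d (_ | ⟨_, hd⟩)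
    exacts [hσ.1, hΓ d hd]
  | impE hM hN ihM ihN =>
    have hM' := (hM.impE hN).isElim_of_normal_app hn
    obtain ⟨hMo, hMπ⟩ := ihM hn.1 hΓ (.inl hM')
    have hπ := PiM.one_imp_iff.mp (hMπ hM')
    exact ⟨⟨hMo, (ihN hn.2.1 hΓ (.inr hπ.1)).1⟩, fun _ => hπ.2⟩
  | allI _ _ _ =>
    exact absurd (hcase.resolve_left nofun) SigmaM.not_one_all
  | allE y hM ih =>
    have hM' := (hM.allE y).isElim_of_normal_oapp hn
    obtain ⟨hMo, hMπ⟩ := ih hn.1 hΓ (.inl hM')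
    exact ⟨hMo, fun _ => (PiM.one_all_iff.mp (hMπ hM')).rename _⟩
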